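/- If r k i = r₁(V) for some iteration index k and node i, then r (k+s) i = r₁(V) for all s ≥ 1, where r₁(V) = max_{i} min_{j ≠ i} d i j. -/

import Mathlib

open Metric

/-- The geometric graph of radius `r` on points `V`. -/
def geomGraph (n : ℕ) (V : Fin n → EuclideanSpace ℝ (Fin 2)) (r : ℝ) :
    SimpleGraph (Fin n) where
  Adj i j := i ≠ j ∧ dist (V i) (V j) ≤ r
  symm := ⟨fun i j ⟨h1, h2⟩ => ⟨h1.symm, by rwa [dist_comm]⟩⟩
  loopless := ⟨fun i ⟨h, _⟩ => h rfl⟩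

/-- The degree-1 radius `r₁(V) = max_i min_{j ≠ i} ‖V i − V j‖`. -/
noncomputable def degOneRadius (n : ℕ) (V : Fin n → EuclideanSpace ℝ (Fin 2)) : ℝ :=
  ⨆ i : Fin n, ⨅ j : {j : Fin n // j ≠ i}, dist (V i) (V j.1)

/-- The iterative range algorithm: `r 0 i = min_{j ≠ i} d i j`, and
`r (k+1) i = max_{j ∈ S k i} r k j` where `S k i = {j : d j i ≤ r k j}`. -/
noncomputable def rIter (n : ℕ) (V : Fin n → EuclideanSpace ℝ (Fin 2)) :
    ℕ → Fin n → ℝ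
  | 0 => fun i => ⨅ j : {j : Fin n // j ≠ i}, dist (V i) (V j.1)
  | k + 1 => fun i =>
      ⨆ j : {j : Fin n // dist (V j) (V i) ≤ rIter n V k j}, rIter n V k j.1


lemma rIter_nonneg (n : ℕ) (V : Fin n → EuclideanSpace ℝ (Fin 2)) :
    ∀ k i, 0 ≤ rIter n V k i := by
  intro k
  induction k with
  | zero =>
    intro i
    exact Real.iInf_nonneg fun j => dist_nonneg
  | succ k ih =>
    intro i
    have hi : dist (V i) (V i) ≤ rIter n V k i := by
      simpa [dist_self] using ih i
    refine le_trans (ih i) ?_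
    show rIter n V k i ≤ ⨆ j : {j : Fin n // dist (V j) (V i) ≤ rIter n V k j},
      rIter n V k j.1
    exact le_ciSup (f := fun j : {j : Fin n // dist (V j) (V i) ≤ rIter n V k j} => rIter n V k j.1) (Finite.bddAbove_range _) ⟨i, hi⟩

lemma rIter_le_degOneRadius (n : ℕ) (hn : 2 ≤ n)
    (V : Fin n → EuclideanSpace ℝ (Fin 2)) :
    ∀ k i, rIter n V k i ≤ degOneRadius n V := by
  intro k
  induction k with
  | zero =>
    intro i
    exact le_ciSup (Finite.bddAbove_range _) i
  | succ k ih =>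
    intro i
    have hi : dist (V i) (V i) ≤ rIter n V k i := by
      simpa [dist_self] using rIter_nonneg n V k i
    have : Nonempty {j : Fin n // dist (V j) (V i) ≤ rIter n V k j} := ⟨⟨i, hi⟩⟩
    show (⨆ j : {j : Fin n // dist (V j) (V i) ≤ rIter n V k j},
      rIter n V k j.1) ≤ degOneRadius n V
    exact ciSup_le fun j => ih j.1

lemma rIter_mono (n : ℕ) (V : Fin n → EuclideanSpace ℝ (Fin 2)) (k : ℕ) (i : Fin n) :
    rIter n V k i ≤ rIter n V (k + 1) i := by
  have hi : dist (V i) (V i) ≤ rIter n V k i := by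
    simpa [dist_self] using rIter_nonneg n V k i
  show rIter n V k i ≤ ⨆ j : {j : Fin n // dist (V j) (V i) ≤ rIter n V k j},
    rIter n V k j.1
  exact le_ciSup (f := fun j : {j : Fin n // dist (V j) (V i) ≤ rIter n V k j} => rIter n V k j.1) (Finite.bddAbove_range _) ⟨i, hi⟩

theorem rIter_stays_at_degOneRadius (n : ℕ) (hn : 2 ≤ n)
    (V : Fin n → EuclideanSpace ℝ (Fin 2)) (k : ℕ) (i : Fin n)
    (hk : rIter n V k i = degOneRadius n V) :
    ∀ s : ℕ, 1 ≤ s → rIter n V (k + s) i = degOneRadius n V := by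
  have key : ∀ s : ℕ, rIter n V (k + s) i = degOneRadius n V := by
    intro s
    induction s with
    | zero => simpa using hk
    | succ s ih =>
      refine le_antisymm (rIter_le_degOneRadius n hn V _ i) ?_
      calc degOneRadius n V = rIter n V (k + s) i := ih.symm
        _ ≤ rIter n V (k + s + 1) i := rIter_mono n V _ i
        _ = rIter n V (k + (s + 1)) i := by ring_nf
  intro s _
  exact key s
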